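/- In the negative-triangle gadget graph G: every edge incident to a vertex of B ∪ C has weight at least 2W; for all j, k ∈ {1,…,N} the edge {b_j, c_k} has weight at most 4W; and consequently every walk from b_j to c_k with at least two edges has total weight at least 4W, hence at least the weight of the edge {b_j, c_k}. -/

import Mathlib

/-- Vertex set of the negative-triangle gadget graph: `A ⊕ B ⊕ C ⊕ Ā`. -/
abbrev NTVert (P N : ℕ) := (Fin P ⊕ Fin N) ⊕ (Fin N ⊕ Fin P)

/-- Vertex `a_i` (0-indexed: `va P N i` is `a_{i+1}`). -/
def va (P N : ℕ) (i : Fin P) : NTVert P N := Sum.inl (Sum.inl i)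
/-- Vertex `b_j`. -/
def vb (P N : ℕ) (j : Fin N) : NTVert P N := Sum.inl (Sum.inr j)
/-- Vertex `c_k`. -/
def vc (P N : ℕ) (k : Fin N) : NTVert P N := Sum.inr (Sum.inl k)
/-- Vertex `ā_i`. -/
def vabar (P N : ℕ) (i : Fin P) : NTVert P N := Sum.inr (Sum.inr i)

/-- Adjacency (as a `Bool`) of the negative-triangle gadget graph. -/
def ntAdjB (P N : ℕ) : NTVert P N → NTVert P N → Bool
  | Sum.inl (Sum.inl i), Sum.inl (Sum.inl i') => i.val + 1 == i'.val || i'.val + 1 == i.val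
  | Sum.inl (Sum.inl _), Sum.inl (Sum.inr _) => true
  | Sum.inl (Sum.inr _), Sum.inl (Sum.inl _) => true
  | Sum.inl (Sum.inr _), Sum.inr (Sum.inl _) => true
  | Sum.inr (Sum.inl _), Sum.inl (Sum.inr _) => true
  | Sum.inr (Sum.inl _), Sum.inr (Sum.inr _) => true
  | Sum.inr (Sum.inr _), Sum.inr (Sum.inl _) => true
  | Sum.inr (Sum.inr i), Sum.inr (Sum.inr i') => i.val + 1 == i'.val || i'.val + 1 == i.val
  | _, _ => false

/-- The negative-triangle gadget graph. -/
def ntGraph (P N : ℕ) : SimpleGraph (NTVert P N) where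
  Adj x y := ntAdjB P N x y = true
  symm := by
    constructor
    rintro ((i | j) | (k | i)) ((i' | j') | (k' | i')) h <;>
      simp_all [ntAdjB] <;> omega
  loopless := by
    constructor
    rintro ((i | j) | (k | i)) h <;> simp_all [ntAdjB]

/-- The edge weights of the negative-triangle gadget graph. -/
def ntW (P N : ℕ) (W : ℤ) (wAB : Fin P → Fin N → ℤ) (wBC : Fin N → Fin N → ℤ)
    (wCA : Fin N → Fin P → ℤ) : NTVert P N → NTVert P N → ℤ
  | Sum.inl (Sum.inl i), Sum.inl (Sum.inr j) => wAB i j + 3 * ((P : ℤ) - (i : ℕ)) * W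
  | Sum.inl (Sum.inr j), Sum.inl (Sum.inl i) => wAB i j + 3 * ((P : ℤ) - (i : ℕ)) * W
  | Sum.inl (Sum.inr j), Sum.inr (Sum.inl k) => wBC j k + 3 * W
  | Sum.inr (Sum.inl k), Sum.inl (Sum.inr j) => wBC j k + 3 * W
  | Sum.inr (Sum.inl k), Sum.inr (Sum.inr i) => wCA k i + 3 * (((i : ℕ) : ℤ) + 1) * W
  | Sum.inr (Sum.inr i), Sum.inr (Sum.inl k) => wCA k i + 3 * (((i : ℕ) : ℤ) + 1) * W
  | _, _ => 0

/-- The total weight of a walk: the sum of the weights of its edges, with multiplicity. -/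
def walkWeight {V : Type*} {G : SimpleGraph V} (w : V → V → ℤ) {s t : V}
    (p : G.Walk s t) : ℤ :=
  (p.darts.map fun d => w d.toProd.1 d.toProd.2).sum

/-!
Edges at `B ∪ C` carry an offset of at least `3W` on top of a weight `≥ -W`, so they weigh at
least `2W`, while `{b_j, c_k}` weighs at most `W + 3W`. All weights are nonnegative, so a walk
from `b_j` to `c_k` with at least two edges weighs at least its first edge (leaving `b_j`) plus
its last edge (entering `c_k`), i.e. at least `4W`.
-/

section WalkWeight

variable {V : Type*} {G : SimpleGraph V} (w : V → V → ℤ)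

lemma walkWeight_cons {u v t : V} (h : G.Adj u v) (p : G.Walk v t) :
    walkWeight w (.cons h p) = w u v + walkWeight w p := by
  simp [walkWeight]

variable {w}

lemma le_walkWeight_of_mem_darts (hw : ∀ x y, G.Adj x y → 0 ≤ w x y) {u v : V}
    {p : G.Walk u v} {d : G.Dart} (hd : d ∈ p.darts) :
    w d.fst d.snd ≤ walkWeight w p := by
  refine List.single_le_sum ?_ _ (List.mem_map_of_mem hd)
  simp only [List.mem_map]
  rintro _ ⟨d', -, rfl⟩
  exact hw _ _ d'.adj

lemma add_le_walkWeight_of_two_le_length (hw : ∀ x y, G.Adj x y → 0 ≤ w x y) {u v : V}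
    (p : G.Walk u v) (hp : 2 ≤ p.length) :
    w u p.snd + w p.penultimate v ≤ walkWeight w p := by
  cases p with
  | nil => simp at hp
  | cons h q =>
    have hq : ¬ q.Nil := by
      rw [SimpleGraph.Walk.not_nil_iff_lt_length]
      simp only [SimpleGraph.Walk.length_cons] at hp
      omega
    rw [walkWeight_cons, SimpleGraph.Walk.snd_cons,
      SimpleGraph.Walk.penultimate_cons_of_not_nil _ _ hq]
    exact (add_le_add_iff_left _).2 (le_walkWeight_of_mem_darts hw (q.lastDart_mem_darts hq))

end WalkWeight

section Gadget

variable {P N : ℕ} {W : ℤ} {wAB : Fin P → Fin N → ℤ} {wBC : Fin N → Fin N → ℤ}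
  {wCA : Fin N → Fin P → ℤ}

lemma ntW_comm (x y : NTVert P N) : ntW P N W wAB wBC wCA x y = ntW P N W wAB wBC wCA y x := by
  rcases x with ((i | j) | (k | i)) <;> rcases y with ((i' | j') | (k' | i')) <;> rfl

lemma one_le_sub_val (i : Fin P) : 1 ≤ (P : ℤ) - (i : ℕ) := by
  have := i.isLt
  omega

lemma two_mul_le_ntW_vb_of_adj (hW : 0 ≤ W) (hAB : ∀ i j, -W ≤ wAB i j)
    (hBC : ∀ j k, -W ≤ wBC j k) {j : Fin N} {y : NTVert P N} (h : (ntGraph P N).Adj (vb P N j) y) :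
    2 * W ≤ ntW P N W wAB wBC wCA (vb P N j) y := by
  rcases y with ((i | j') | (k | i)) <;> simp only [ntGraph, ntAdjB, vb, Bool.false_eq_true] at h <;> simp only [ntW, vb]
  · nlinarith [hAB i j, one_le_sub_val i]
  · linarith [hBC j k]

lemma two_mul_le_ntW_vc_of_adj (hW : 0 ≤ W) (hBC : ∀ j k, -W ≤ wBC j k)
    (hCA : ∀ k i, -W ≤ wCA k i) {k : Fin N} {y : NTVert P N} (h : (ntGraph P N).Adj (vc P N k) y) :
    2 * W ≤ ntW P N W wAB wBC wCA (vc P N k) y := by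
  rcases y with ((i | j) | (k' | i)) <;> simp only [ntGraph, ntAdjB, vc, Bool.false_eq_true] at h <;> simp only [ntW, vc]
  · linarith [hBC j k]
  · nlinarith [hCA k i, (i : ℕ).cast_nonneg (α := ℤ)]

lemma ntW_nonneg (hW : 0 ≤ W) (hAB : ∀ i j, -W ≤ wAB i j) (hBC : ∀ j k, -W ≤ wBC j k)
    (hCA : ∀ k i, -W ≤ wCA k i) (x y : NTVert P N) : 0 ≤ ntW P N W wAB wBC wCA x y := by
  rcases x with ((i | j) | (k | i)) <;> rcases y with ((i' | j') | (k' | i')) <;>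
    simp only [ntW, le_refl]
  · nlinarith [hAB i j', one_le_sub_val i]
  · nlinarith [hAB i' j, one_le_sub_val i']
  · linarith [hBC j k']
  · linarith [hBC j' k]
  · nlinarith [hCA k i', (i' : ℕ).cast_nonneg (α := ℤ)]
  · nlinarith [hCA k' i, (i : ℕ).cast_nonneg (α := ℤ)]

lemma ntW_vb_vc_le (hBC : ∀ j k, wBC j k ≤ W) (j k : Fin N) :
    ntW P N W wAB wBC wCA (vb P N j) (vc P N k) ≤ 4 * W := by
  simp only [ntW, vb, vc]
  linarith [hBC j k]

end Gadget

theorem stmt2_general (P N : ℕ) (W : ℤ) (hW : 1 ≤ W)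
    (wAB : Fin P → Fin N → ℤ) (wBC : Fin N → Fin N → ℤ) (wCA : Fin N → Fin P → ℤ)
    (hAB : ∀ i j, -W ≤ wAB i j ∧ wAB i j ≤ W)
    (hBC : ∀ j k, -W ≤ wBC j k ∧ wBC j k ≤ W)
    (hCA : ∀ k i, -W ≤ wCA k i ∧ wCA k i ≤ W) :
    (∀ x y : NTVert P N, (ntGraph P N).Adj x y →
        ((∃ j, x = vb P N j) ∨ (∃ k, x = vc P N k)) →
        2 * W ≤ ntW P N W wAB wBC wCA x y) ∧
    (∀ (j k : Fin N), ntW P N W wAB wBC wCA (vb P N j) (vc P N k) ≤ 4 * W) ∧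
    (∀ (j k : Fin N) (p : (ntGraph P N).Walk (vb P N j) (vc P N k)), 2 ≤ p.length →
        4 * W ≤ walkWeight (ntW P N W wAB wBC wCA) p ∧
        ntW P N W wAB wBC wCA (vb P N j) (vc P N k) ≤
          walkWeight (ntW P N W wAB wBC wCA) p) := by
  have hW₀ : 0 ≤ W := by omega
  have hAB' := fun i j => (hAB i j).1
  have hBC' := fun j k => (hBC j k).1
  have hCA' := fun k i => (hCA k i).1
  have upper := ntW_vb_vc_le (wAB := wAB) (wCA := wCA) fun j k => (hBC j k).2
  refine ⟨?_, upper, fun j k p hp => ?_⟩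
  · rintro x y h (⟨j, rfl⟩ | ⟨k, rfl⟩)
    · exact two_mul_le_ntW_vb_of_adj hW₀ hAB' hBC' h
    · exact two_mul_le_ntW_vc_of_adj hW₀ hBC' hCA' h
  have hp₀ : ¬ p.Nil := by
    rw [SimpleGraph.Walk.not_nil_iff_lt_length]
    omega
  have first := two_mul_le_ntW_vb_of_adj hW₀ hAB' hBC' (wCA := wCA) (p.adj_snd hp₀)
  have last := two_mul_le_ntW_vc_of_adj hW₀ hBC' hCA' (wAB := wAB) (p.adj_penultimate hp₀).symm
  rw [ntW_comm] at last
  have first_add_last := add_le_walkWeight_of_two_le_length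
    (fun x y _ => ntW_nonneg hW₀ hAB' hBC' hCA' x y) p hp
  exact ⟨by linarith, by linarith [upper j k]⟩

/-- In the negative-triangle gadget graph: every edge incident to a vertex
of `B ∪ C` has weight at least `2W`; every edge `{b_j, c_k}` has weight at most `4W`;
and consequently every walk from `b_j` to `c_k` with at least two edges has total weight
at least `4W`, hence at least the weight of the edge `{b_j, c_k}`. -/
theorem stmt2 (P N : ℕ) (hP : 1 ≤ P) (hN : 1 ≤ N) (W : ℤ) (hW : 1 ≤ W)
    (wAB : Fin P → Fin N → ℤ) (wBC : Fin N → Fin N → ℤ) (wCA : Fin N → Fin P → ℤ)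
    (hAB : ∀ i j, -W ≤ wAB i j ∧ wAB i j ≤ W)
    (hBC : ∀ j k, -W ≤ wBC j k ∧ wBC j k ≤ W)
    (hCA : ∀ k i, -W ≤ wCA k i ∧ wCA k i ≤ W) :
    (∀ x y : NTVert P N, (ntGraph P N).Adj x y →
        ((∃ j, x = vb P N j) ∨ (∃ k, x = vc P N k)) →
        2 * W ≤ ntW P N W wAB wBC wCA x y) ∧
    (∀ (j k : Fin N), ntW P N W wAB wBC wCA (vb P N j) (vc P N k) ≤ 4 * W) ∧
    (∀ (j k : Fin N) (p : (ntGraph P N).Walk (vb P N j) (vc P N k)), 2 ≤ p.length →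
        4 * W ≤ walkWeight (ntW P N W wAB wBC wCA) p ∧
        ntW P N W wAB wBC wCA (vb P N j) (vc P N k) ≤
          walkWeight (ntW P N W wAB wBC wCA) p) :=
  stmt2_general P N W hW wAB wBC wCA hAB hBC hCA
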